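/- arXiv:1508.05013 — 3 statements merged into one kernel-verified Lean document; each statement's English description precedes it below -/
import Mathlib

section
/- Let X be a finite nonempty set of assignments, F a finite nonempty index set, Y a linear order, f : F → X → Y, and r : Y → ℕ a strictly monotone rank function. Define the min-sum reduction g_I(x) := 2^{r(f_I(x))} ∈ ℕ. Assume that for every x ∈ X the values f_I(x), I ∈ F, are pairwise distinct (no ties within an assignment). Then every minimizer over X of x ↦ ∑_{I∈F} g_I(x) is a minimizer over X of x ↦ max_{I∈F} f_I(x). (This is the paper's theorem that min-max inference reduces to min-sum inference via exponentiated ranks.) -/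
lemma sum_range_two_pow_lt (n : ℕ) : ∑ k ∈ Finset.range n, 2 ^ k < 2 ^ n := by
  induction n with
  | zero => simp
  | succ n ih =>
    rw [Finset.sum_range_succ, pow_succ]
    omega

/-- Min-max inference reduces to min-sum inference via exponentiated ranks:
with `g I x = 2 ^ r (f I x)` and no ties within any assignment, every minimizer
of the sum is a minimizer of the max. -/
theorem minmax_reduces_to_minsum {X F Y : Type*} [Fintype X] [Nonempty X]
    [Fintype F] [Nonempty F] [LinearOrder Y]
    (f : F → X → Y) (r : Y → ℕ) (hr : StrictMono r)
    (g : F → X → ℕ) (hg : ∀ I x, g I x = 2 ^ r (f I x))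
    (hdist : ∀ x : X, Function.Injective fun I : F => f I x)
    (x : X) (hmin : ∀ x' : X, ∑ I : F, g I x ≤ ∑ I : F, g I x') :
    ∀ x' : X,
      (Finset.univ.sup' Finset.univ_nonempty fun I : F => f I x)
        ≤ Finset.univ.sup' Finset.univ_nonempty fun I : F => f I x' := by
  intro x'
  by_contra hlt
  push_neg at hlt
  set M := Finset.univ.sup' Finset.univ_nonempty fun I : F => f I x with hM
  -- M is attained
  obtain ⟨I0, -, hI0⟩ := Finset.exists_mem_eq_sup' Finset.univ_nonempty fun I : F => f I x
  -- lower bound on sum at x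
  have h1 : 2 ^ r M ≤ ∑ I : F, g I x := by
    have := Finset.single_le_sum (f := fun I : F => g I x)
      (fun i _ => Nat.zero_le _) (Finset.mem_univ I0)
    simp only [hg] at this
    rw [hM, hI0]
    simpa [hg] using this
  -- upper bound on sum at x'
  have hinj : Function.Injective fun I : F => r (f I x') :=
    fun a b h => hdist x' (hr.injective h)
  have h2 : ∑ I : F, g I x' = ∑ k ∈ Finset.univ.image (fun I : F => r (f I x')), 2 ^ k := by
    rw [Finset.sum_image (fun a _ b _ h => hinj h)]
    simp [hg]
  have hsub : Finset.univ.image (fun I : F => r (f I x')) ⊆ Finset.range (r M) := by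
    intro k hk
    simp only [Finset.mem_image, Finset.mem_univ, true_and] at hk
    obtain ⟨I, rfl⟩ := hk
    rw [Finset.mem_range]
    exact hr (lt_of_le_of_lt (Finset.le_sup' (fun I : F => f I x') (Finset.mem_univ I)) hlt)
  have h3 : ∑ I : F, g I x' < 2 ^ r M := by
    rw [h2]
    calc ∑ k ∈ Finset.univ.image (fun I : F => r (f I x')), 2 ^ k
        ≤ ∑ k ∈ Finset.range (r M), 2 ^ k := Finset.sum_le_sum_of_subset hsub
      _ < 2 ^ r M := sum_range_two_pow_lt _
  exact absurd (hmin x') (by omega)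
end

section
/- Let N ≥ 2, A : Fin N → Fin N → ℝ, and y ∈ ℝ. Say x : Fin N → ZMod N satisfies the p_y-reduced bottleneck-TSP constraints if for all i ≠ j in Fin N: x i ≠ x j, and x i = x j − 1 implies A i j ≤ y, and x j = x i − 1 implies A j i ≤ y (arithmetic modulo N). Then x satisfies these constraints if and only if x is a bijection and its inverse h : ZMod N → Fin N satisfies A (h k) (h (k+1)) ≤ y for every k ∈ ZMod N. That is, the p_y-satisfying assignments are exactly the directed Hamiltonian cycles of the directed graph with arcs {(i,j) : A i j ≤ y}, with x i recording the time step at which node i is visited. (This is the paper's proposition on the p_y-reduction of the bottleneck-TSP factor-graph.) -/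
/-- The p_y-reduction of the bottleneck-TSP factor-graph defines a uniform
distribution over directed Hamiltonian cycles of the graph with arcs
{(i,j) : A i j ≤ y}: an assignment of visiting times satisfies the reduced
constraints iff it is a bijection whose inverse traverses only arcs of cost ≤ y. -/
theorem btsp_py_reduction {N : ℕ} (hN : 2 ≤ N) (A : Fin N → Fin N → ℝ) (y : ℝ)
    (x : Fin N → ZMod N) :
    (∀ i j : Fin N, i ≠ j →
        x i ≠ x j ∧ (x i = x j - 1 → A i j ≤ y) ∧ (x j = x i - 1 → A j i ≤ y))
      ↔ (Function.Bijective x ∧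
          ∃ h : ZMod N → Fin N, Function.LeftInverse h x ∧
            Function.RightInverse h x ∧
            ∀ k : ZMod N, A (h k) (h (k + 1)) ≤ y) := by
  haveI : NeZero N := ⟨by omega⟩
  haveI : Fact (1 < N) := ⟨by omega⟩
  constructor
  · intro hx
    have hinj : Function.Injective x := by
      intro i j hij
      by_contra hne
      exact (hx i j hne).1 hij
    have hbij : Function.Bijective x :=
      (Fintype.bijective_iff_injective_and_card x).2
        ⟨hinj, by simp [ZMod.card]⟩
    refine ⟨hbij, ?_⟩
    let e := Equiv.ofBijective x hbij
    refine ⟨e.symm, e.left_inv, e.right_inv, ?_⟩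
    intro k
    have h1 : x (e.symm k) = k := e.apply_symm_apply k
    have h2 : x (e.symm (k + 1)) = k + 1 := e.apply_symm_apply (k + 1)
    have hne : e.symm k ≠ e.symm (k + 1) := by
      intro hcontra
      have : k = k + 1 := e.symm.injective hcontra
      have : (1 : ZMod N) = 0 := by
        have := left_eq_add.mp this
        exact this
      exact one_ne_zero this
    exact (hx _ _ hne).2.1 (by rw [h1, h2]; ring)
  · rintro ⟨hbij, h, hli, hri, harc⟩
    intro i j hij
    refine ⟨fun he => hij (hbij.1 he), ?_, ?_⟩
    · intro hxy
      have := harc (x i)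
      rw [hli i, hxy] at this
      have : A i (h (x j - 1 + 1)) ≤ y := this
      simpa [hli j] using this
    · intro hxy
      have := harc (x j)
      rw [hli j, hxy] at this
      have : A j (h (x i - 1 + 1)) ≤ y := this
      simpa [hli i] using this
end

section
/- Fix a factor-graph over finite variables V with finite nonempty domains X_i and a finite nonempty family F of real-valued factors f_I on scopes S_I; let y* := min_x max_{I∈F} f_I(x|_{S_I}) be the min-max value. Call a family of pseudo-marginals (p_I : ∏_{i∈S_I} X_i → ℝ)_{I∈F} together with (p_i : X_i → ℝ)_{i∈V} feasible if all values are nonnegative, ∑_{x_i∈X_i} p_i(x_i) = 1 for every i ∈ V, and for every I ∈ F, i ∈ S_I and x_i ∈ X_i, the marginal of p_I obtained by summing over the coordinates in S_I∖{i} at value x_i equals p_i(x_i) (local consistency). Then: (a) there exists a feasible family whose LP objective max_{I∈F} ∑_{x_{S_I}} p_I(x_{S_I}) f_I(x_{S_I}) equals y* (the point masses of a min-max optimizer are feasible), so the LP optimum lower-bounds the min-max value; and (b) every feasible family in which each p_i takes only the values 0 and 1 has LP objective max_{I∈F} ∑_{x_{S_I}} p_I(x_{S_I}) f_I(x_{S_I})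 ≥ y*. (This is the paper's claim on the LP relaxation of min-max inference.) -/
/-- A family of pseudo-marginals is feasible for the min-max LP if all values are
nonnegative, the single-variable pseudo-marginals are normalized, and locally
consistent with the factor pseudo-marginals. -/
def FeasibleFamily {V F : Type*} [DecidableEq V]
    (X : V → Type*) [∀ i, Fintype (X i)] [∀ i, DecidableEq (X i)]
    (S : F → Finset V)
    (pF : (I : F) → ((i : S I) → X i.1) → ℝ)
    (pV : (i : V) → X i → ℝ) : Prop :=
  (∀ (I : F) (xI : (i : S I) → X i.1), 0 ≤ pF I xI) ∧
  (∀ (i : V) (xi : X i), 0 ≤ pV i xi) ∧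
  (∀ i : V, ∑ xi : X i, pV i xi = 1) ∧
  (∀ (I : F) (i : S I) (xi : X i.1),
    ∑ xI ∈ Finset.univ.filter (fun xI : (j : S I) → X j.1 => xI i = xi), pF I xI
      = pV i.1 xi)

/-! The point masses of a full assignment `x` (at `x` and at its restrictions) form a feasible
family whose LP objective is the cost `max_I f_I(x|_{S_I})` of `x`; a min-max optimizer gives (a).
Conversely, in a feasible family with 0/1 variable marginals each `p_i` is the point mass at some
`x_i`. Local consistency and nonnegativity then kill `p_I` off `x|_{S_I}`, and consistency at any
variable of the (nonempty) scope gives it mass 1 there, so the objective is the cost of `x`. -/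

open Finset

theorem Fintype.sum_pi_single_one_mul {α R : Type*} [Fintype α] [DecidableEq α] [Semiring R]
    (a : α) (g : α → R) : ∑ b, (Pi.single a 1 : α → R) b * g b = g a := by
  simp [Pi.single_apply]

theorem Finset.sum_filter_pi_single_one {α β R : Type*} [Fintype α] [DecidableEq α]
    [DecidableEq β] [AddCommMonoidWithOne R] (φ : α → β) (a : α) (c : β) :
    ∑ b ∈ univ.filter (fun b => φ b = c), (Pi.single a 1 : α → R) b =
      (Pi.single (φ a) 1 : β → R) c := by
  rw [sum_pi_single', Pi.single_apply]
  simp [eq_comm]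

theorem exists_eq_pi_single_one_of_sum_eq_one {α R : Type*} [Fintype α] [DecidableEq α]
    [Semiring R] [LinearOrder R] [IsStrictOrderedRing R] {p : α → R}
    (h01 : ∀ a, p a = 0 ∨ p a = 1) (hsum : ∑ a, p a = 1) : ∃ a, p = Pi.single a 1 := by
  have hnonneg : ∀ a, 0 ≤ p a := fun a => by rcases h01 a with h | h <;> simp [h]
  obtain ⟨a, ha⟩ : ∃ a, p a = 1 := by
    by_contra! h
    simp [sum_eq_zero fun b _ => (h01 b).resolve_right (h b)] at hsum
  refine ⟨a, funext fun b => ?_⟩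
  rcases eq_or_ne b a with rfl | hb
  · simp [ha]
  rw [Pi.single_eq_of_ne hb]
  refine (h01 b).resolve_right fun hb1 => ?_
  have hpair : p a + p b ≤ ∑ c, p c := by
    rw [← sum_pair hb.symm]
    exact sum_le_sum_of_subset_of_nonneg (subset_univ _) fun c _ _ => hnonneg c
  rw [ha, hb1, hsum] at hpair
  exact absurd hpair (by simp)

section PointMasses

variable {V F : Type*} [DecidableEq V] {X : V → Type*} [∀ i, Fintype (X i)]
  [∀ i, DecidableEq (X i)] {S : F → Finset V}

theorem feasibleFamily_pi_single (x : (i : V) → X i) :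
    FeasibleFamily X S (fun I => Pi.single ((S I).restrict x) 1) fun i => Pi.single (x i) 1 :=
  ⟨fun _ _ => by simp only [Pi.single_apply]; positivity,
    fun _ _ => by simp only [Pi.single_apply]; positivity,
    fun _ => by simp,
    fun I i => sum_filter_pi_single_one (fun xI : (j : S I) → X j.1 => xI i) _⟩

theorem FeasibleFamily.eq_pi_single_restrict {pF : (I : F) → ((i : S I) → X i.1) → ℝ}
    {x : (i : V) → X i} (h : FeasibleFamily X S pF fun i => Pi.single (x i) 1) {I : F}
    (hI : (S I).Nonempty) : pF I = Pi.single ((S I).restrict x) 1 := by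
  obtain ⟨hnonneg, -, -, hcons⟩ := h
  have hzero : ∀ xI, xI ≠ (S I).restrict x → pF I xI = 0 := by
    intro xI hne
    obtain ⟨j, hj⟩ := Function.ne_iff.mp hne
    have hmarg : ∑ yI ∈ univ.filter (fun yI => yI j = xI j), pF I yI = 0 :=
      (hcons I j (xI j)).trans (Pi.single_eq_of_ne hj _)
    exact (sum_eq_zero_iff_of_nonneg fun y _ => hnonneg I y).mp hmarg xI (by simp)
  obtain ⟨i, hi⟩ := hI
  have hone : pF I ((S I).restrict x) = 1 := by
    have hmarg := (hcons I ⟨i, hi⟩ (x i)).trans (Pi.single_eq_same _ _)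
    rwa [sum_eq_single_of_mem _ (by simp) fun b _ hb => hzero b hb] at hmarg
  funext xI
  rcases eq_or_ne xI ((S I).restrict x) with rfl | hne
  · simp [hone]
  · simp [hzero xI hne, hne]

variable [Fintype F] [Nonempty F]

def lpObjective (S : F → Finset V) (f pF : (I : F) → ((i : S I) → X i.1) → ℝ) : ℝ :=
  univ.sup' univ_nonempty fun I => ∑ xI, pF I xI * f I xI

theorem lpObjective_pi_single (f : (I : F) → ((i : S I) → X i.1) → ℝ)
    (x : (i : V) → X i) :
    lpObjective S f (fun I => Pi.single ((S I).restrict x) 1) =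
      univ.sup' univ_nonempty fun I => f I ((S I).restrict x) := by
  simp only [lpObjective, Fintype.sum_pi_single_one_mul]

end PointMasses

/-- LP relaxation of min-max inference: (a) some feasible family attains the
min-max value y* as its LP objective (so the LP optimum lower-bounds y*), and
(b) every feasible family with 0/1-valued single-variable pseudo-marginals has
LP objective at least y*. -/
theorem minmax_lp_relaxation {V F : Type*} [Fintype V] [DecidableEq V] [Fintype F]
    [Nonempty F]
    (X : V → Type*) [∀ i, Fintype (X i)] [∀ i, Nonempty (X i)] [∀ i, DecidableEq (X i)]
    (S : F → Finset V) (hS : ∀ I, (S I).Nonempty)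
    (f : (I : F) → ((i : S I) → X i.1) → ℝ)
    (ystar : ℝ)
    (hy : ystar = Finset.univ.inf' Finset.univ_nonempty fun x : (i : V) → X i =>
        Finset.univ.sup' Finset.univ_nonempty fun I : F => f I fun i => x i.1) :
    (∃ (pF : (I : F) → ((i : S I) → X i.1) → ℝ) (pV : (i : V) → X i → ℝ),
        FeasibleFamily X S pF pV ∧
        (Finset.univ.sup' Finset.univ_nonempty fun I : F =>
            ∑ xI : (i : S I) → X i.1, pF I xI * f I xI) = ystar) ∧
    (∀ (pF : (I : F) → ((i : S I) → X i.1) → ℝ) (pV : (i : V) → X i → ℝ),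
        FeasibleFamily X S pF pV →
        (∀ (i : V) (xi : X i), pV i xi = 0 ∨ pV i xi = 1) →
        ystar ≤ Finset.univ.sup' Finset.univ_nonempty fun I : F =>
            ∑ xI : (i : S I) → X i.1, pF I xI * f I xI) := by
  have hcost := lpObjective_pi_single (S := S) f
  refine ⟨?_, fun pF pV hfeas h01 => ?_⟩
  · obtain ⟨x, -, hx⟩ := exists_mem_eq_inf' univ_nonempty
      fun x : (i : V) → X i => univ.sup' univ_nonempty fun I : F => f I ((S I).restrict x)
    exact ⟨_, _, feasibleFamily_pi_single x, (hcost x).trans (hy ▸ hx).symm⟩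
  · choose x hx using fun i => exists_eq_pi_single_one_of_sum_eq_one (h01 i) (hfeas.2.2.1 i)
    obtain rfl : pV = fun i => Pi.single (x i) 1 := funext hx
    have hpF : pF = fun I => Pi.single ((S I).restrict x) 1 :=
      funext fun I => hfeas.eq_pi_single_restrict (hS I)
    change ystar ≤ lpObjective S f pF
    rw [hpF, hcost, hy]
    exact inf'_le _ (mem_univ x)
end
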